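/- arXiv:2308.03748 — 3 statements merged into one kernel-verified Lean document; each statement's English description precedes it below -/
import Mathlib

section
/- Let n ≥ 2 and N = 2^n + 2. An n-element set A of positive integers is sumset-distinct modulo N if and only if one of the following holds: (i) A contains exactly one odd element a, every element of A \ {a} is even, and the (n-1)-element set { b/2 : b ∈ A \ {a} } is sumset-distinct modulo N/2 = 2^{n-1} + 1; or (ii) A contains an element c with c ≡ N/2 (mod N) and the (n-1)-element set A \ {c} is sumset-distinct modulo N/2 = 2^{n-1} + 1. -/
/-- An `n`-element set `A` of positive integers is *sumset-distinct modulo `N`*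
if all subset sums (including the empty sum) are pairwise distinct modulo `N`. -/
def SumsetDistinctMod (N : ℕ) (A : Finset ℕ) : Prop :=
  ∀ B ⊆ A, ∀ C ⊆ A, (∑ x ∈ B, x) % N = (∑ x ∈ C, x) % N → B = C

/-!
Write `N = 2M` with `M = 2^(n-1) + 1` odd; by the Chinese remainder theorem a residue modulo `N`
is a parity together with a residue modulo `M`. An element `c ≡ M (mod N)` is odd and divisible
by `M`, so it flips the parity of a subset sum without changing it modulo `M`: this gives (ii),
both ways. If `a` is the only odd element, a subset sum modulo `N` records whether `a` was used
and, modulo `M`, half the sum of the other elements: this gives (i), both ways.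

Conversely, a sumset-distinct `A` has an odd element, since otherwise its `2^n > M` subset sums
would be distinct modulo `M`. Suppose it has two, `a ≠ b`. The subsets of either parity of sum
are then `2^(n-1) = M - 1` in number with distinct sums modulo `M`, so each parity class misses
exactly one residue, `m₀` resp. `m₁`. Writing `σ(B)` for the sum of `B`, pairing `B` with
`B ∆ {a}` and then with `B ∆ {b}` shows `∑_B (-1)^σ(B) σ(B) = 0`, whence `m₀ = m₁`. So for a primitive `M`-th root of unity `ζ` in
characteristic two, `∏_{x ∈ A} (1 + ζ^x) = ∑_B ζ^σ(B) = 2 (∑_j ζ^j - ζ^m₀) = 0`: some `x ∈ A`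
has `ζ^x = 1`, i.e. `M ∣ x`, and sumset-distinctness forces `x` odd, so `x ≡ M (mod N)`.
-/

open Finset

theorem modEq_two_mul_of_odd {a b M : ℕ} (hM : Odd M) (h₂ : a ≡ b [MOD 2]) (hM' : a ≡ b [MOD M]) :
    a ≡ b [MOD 2 * M] :=
  (Nat.modEq_and_modEq_iff_modEq_mul (Nat.coprime_two_left.2 hM)).1 ⟨h₂, hM'⟩

theorem add_modEq_self_of_mod_two_mul_eq {c M : ℕ} (hc : c % (2 * M) = M) (s : ℕ) :
    c + s ≡ s [MOD M] := by
  have hc0 : c ≡ 0 [MOD M] := by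
    rw [Nat.ModEq, ← Nat.mod_mod_of_dvd c (dvd_mul_left M 2), hc, Nat.mod_self, Nat.zero_mod]
  simpa using hc0.add_right s

namespace SumsetDistinctMod

variable {N M : ℕ} {A A' : Finset ℕ}

theorem mono (h : SumsetDistinctMod N A) (hA' : A' ⊆ A) : SumsetDistinctMod N A' :=
  fun B hB C hC => h B (hB.trans hA') C (hC.trans hA')

theorem of_dvd (h : SumsetDistinctMod M A) (hMN : M ∣ N) : SumsetDistinctMod N A :=
  fun B hB C hC hBC => h B hB C hC (Nat.ModEq.of_dvd hMN hBC)

theorem two_pow_card_le (hN : N ≠ 0) (h : SumsetDistinctMod N A) : 2 ^ #A ≤ N := by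
  have hinj : Set.InjOn (fun B => (∑ x ∈ B, x) % N) A.powerset := fun B hB C hC hBC =>
    h B (mem_powerset.1 hB) C (mem_powerset.1 hC) hBC
  simpa using card_le_card_of_injOn (t := range N) _
    (fun B _ => mem_range.2 (Nat.mod_lt _ (Nat.pos_of_ne_zero hN))) hinj

end SumsetDistinctMod

theorem sumsetDistinctMod_insert_iff {N c : ℕ} {A : Finset ℕ} (hc : c ∉ A) :
    SumsetDistinctMod N (insert c A) ↔
      SumsetDistinctMod N A ∧ ∀ B ⊆ A, ∀ C ⊆ A, (c + ∑ x ∈ B, x) % N ≠ (∑ x ∈ C, x) % N := by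
  have hsum : ∀ B ⊆ A, ∑ x ∈ insert c B, x = c + ∑ x ∈ B, x := fun B hB =>
    sum_insert fun hcB => hc (hB hcB)
  constructor
  · intro h
    refine ⟨h.mono (subset_insert c A), fun B hB C hC hBC => ?_⟩
    have hBC' : insert c B = C :=
      h _ (insert_subset_insert c hB) _ (hC.trans (subset_insert c A)) (by rwa [hsum B hB])
    exact hc (hC (hBC' ▸ mem_insert_self c B))
  · rintro ⟨h, hc'⟩ B hB C hC hBC
    rw [← mem_powerset, powerset_insert, mem_union, mem_image] at hB hC
    rcases hB with hB | ⟨B, hB, rfl⟩ <;> rcases hC with hC | ⟨C, hC, rfl⟩ <;>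
      rw [mem_powerset] at hB hC
    · exact h B hB C hC hBC
    · exact absurd hBC.symm (by rw [hsum C hC]; exact hc' C hC B hB)
    · exact absurd hBC (by rw [hsum B hB]; exact hc' B hB C hC)
    · rw [hsum B hB, hsum C hC] at hBC
      rw [h B hB C hC (Nat.ModEq.add_left_cancel' c hBC)]

theorem sumsetDistinctMod_two_mul_image_two_mul_iff {M : ℕ} {A : Finset ℕ} :
    SumsetDistinctMod (2 * M) (A.image (2 * ·)) ↔ SumsetDistinctMod M A := by
  have hinj : Function.Injective (2 * · : ℕ → ℕ) := fun x y hxy => by simpa using hxy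
  have hsum : ∀ B : Finset ℕ, ∑ x ∈ B.image (2 * ·), x = 2 * ∑ x ∈ B, x := fun B => by
    rw [sum_image fun x _ y _ hxy => hinj hxy, mul_sum]
  constructor
  · intro h B hB C hC hBC
    refine image_injective hinj (h _ (image_subset_image hB) _ (image_subset_image hC) ?_)
    rw [hsum, hsum]
    exact Nat.ModEq.mul_left' 2 hBC
  · intro h B hB C hC hBC
    obtain ⟨B, hBA, rfl⟩ := subset_image_iff.1 hB
    obtain ⟨C, hCA, rfl⟩ := subset_image_iff.1 hC
    rw [hsum, hsum] at hBC
    rw [h B hBA C hCA (Nat.ModEq.mul_left_cancel' two_ne_zero hBC)]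

theorem sumsetDistinctMod_image_div_two_iff {M : ℕ} {A : Finset ℕ} (hA : ∀ b ∈ A, Even b) :
    SumsetDistinctMod M (A.image (fun b => b / 2)) ↔ SumsetDistinctMod (2 * M) A := by
  have : (A.image (fun b => b / 2)).image (2 * ·) = A := by
    rw [image_image]
    conv_rhs => rw [← image_id (s := A)]
    exact image_congr fun b hb => Nat.two_mul_div_two_of_even (hA b hb)
  rw [← sumsetDistinctMod_two_mul_image_two_mul_iff, this]

namespace SumsetDistinctMod

variable {N M : ℕ} {A : Finset ℕ}

theorem of_two_mul_of_even (hM : Odd M) (hA : ∀ a ∈ A, Even a)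
    (h : SumsetDistinctMod (2 * M) A) : SumsetDistinctMod M A := by
  have hsum : ∀ B ⊆ A, (∑ x ∈ B, x) % 2 = 0 := fun B hB =>
    Nat.even_iff.1 (even_sum _ fun x hx => hA x (hB hx))
  exact fun B hB C hC hBC =>
    h B hB C hC (modEq_two_mul_of_odd hM ((hsum B hB).trans (hsum C hC).symm) hBC)

theorem exists_odd (hM : Odd M) (hA : M < 2 ^ #A) (h : SumsetDistinctMod (2 * M) A) :
    ∃ a ∈ A, Odd a := by
  by_contra! hev
  have := (h.of_two_mul_of_even hM fun a ha => Nat.not_odd_iff_even.1 (hev a ha)).two_pow_card_le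
    hM.pos.ne'
  omega

theorem insert_of_odd (hN : Even N) (hA : ∀ b ∈ A, Even b) {a : ℕ} (ha : Odd a)
    (h : SumsetDistinctMod N A) : SumsetDistinctMod N (insert a A) := by
  refine (sumsetDistinctMod_insert_iff fun haA => Nat.not_even_iff_odd.2 ha (hA a haA)).2
    ⟨h, fun B hB C hC hBC => ?_⟩
  have hB' := Nat.odd_iff.1 (ha.add_even (even_sum _ fun x hx => hA x (hB hx)))
  have hC' := Nat.even_iff.1 (even_sum _ fun x hx => hA x (hC hx))
  have := Nat.ModEq.of_dvd (even_iff_two_dvd.1 hN) hBC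
  rw [Nat.ModEq] at this
  omega

theorem insert_of_mod_two_mul_eq {c : ℕ} (hM : M ≠ 0) (hc : c % (2 * M) = M) (hcA : c ∉ A)
    (h : SumsetDistinctMod M A) : SumsetDistinctMod (2 * M) (insert c A) := by
  refine (sumsetDistinctMod_insert_iff hcA).2 ⟨h.of_dvd (dvd_mul_left M 2), fun B hB C hC hBC => ?_⟩
  have hBC' : B = C := h B hB C hC ((add_modEq_self_of_mod_two_mul_eq hc _).symm.trans
    (Nat.ModEq.of_dvd (dvd_mul_left M 2) hBC))
  subst hBC'
  have : c ≡ 0 [MOD 2 * M] := Nat.ModEq.add_right_cancel' (∑ x ∈ B, x) (by rwa [zero_add])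
  rw [Nat.ModEq, hc, Nat.zero_mod] at this
  exact hM this

theorem of_insert_of_mod_two_mul_eq {c : ℕ} (hM : Odd M) (hc : c % (2 * M) = M) (hcA : c ∉ A)
    (h : SumsetDistinctMod (2 * M) (insert c A)) : SumsetDistinctMod M A := by
  obtain ⟨h, hc'⟩ := (sumsetDistinctMod_insert_iff hcA).1 h
  have hc2 : c % 2 = 1 := by
    rw [← Nat.mod_mod_of_dvd c (dvd_mul_right 2 M), hc, Nat.odd_iff.1 hM]
  intro B hB C hC hBC
  by_cases hpar : (∑ x ∈ B, x) ≡ (∑ x ∈ C, x) [MOD 2]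
  · exact h B hB C hC (modEq_two_mul_of_odd hM hpar hBC)
  · refine absurd (modEq_two_mul_of_odd hM ?_ ?_) (hc' B hB C hC)
    · unfold Nat.ModEq at hpar ⊢
      omega
    · exact (add_modEq_self_of_mod_two_mul_eq hc _).trans hBC

theorem mod_two_mul_eq_of_dvd (hM : Odd M) (h : SumsetDistinctMod (2 * M) A) {x : ℕ}
    (hx : x ∈ A) (hMx : M ∣ x) : x % (2 * M) = M := by
  have hx0 : x ≡ 0 [MOD M] := Nat.modEq_zero_iff_dvd.2 hMx
  have hxo : Odd x := by
    by_contra hxe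
    have hx2 : x ≡ 0 [MOD 2] := Nat.modEq_zero_iff_dvd.2 (Nat.not_odd_iff_even.1 hxe).two_dvd
    have := h {x} (singleton_subset_iff.2 hx) ∅ (empty_subset A)
      (by simpa [Nat.ModEq] using modEq_two_mul_of_odd hM hx2 hx0)
    exact singleton_ne_empty x this
  have : x ≡ M [MOD 2 * M] := modEq_two_mul_of_odd hM
    ((Nat.odd_iff.1 hxo).trans (Nat.odd_iff.1 hM).symm)
    (hx0.trans (Nat.modEq_zero_iff_dvd.2 dvd_rfl).symm)
  exact Eq.trans this (Nat.mod_eq_of_lt (by have := hM.pos; omega))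

end SumsetDistinctMod

theorem sumsetDistinctMod_two_mul_iff_image_div_two {M a : ℕ} {A : Finset ℕ} (ha : a ∈ A)
    (hao : Odd a) (hA : ∀ b ∈ A, b ≠ a → Even b) :
    SumsetDistinctMod (2 * M) A ↔ SumsetDistinctMod M ((A.erase a).image (fun b => b / 2)) := by
  have hev : ∀ b ∈ A.erase a, Even b := fun b hb =>
    hA b (mem_of_mem_erase hb) (ne_of_mem_erase hb)
  rw [sumsetDistinctMod_image_div_two_iff hev]
  refine ⟨fun h => h.mono (erase_subset a A), fun h => ?_⟩
  rw [← insert_erase ha]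
  exact h.insert_of_odd (even_two_mul M) hev hao

theorem sumsetDistinctMod_two_mul_iff_erase {M c : ℕ} {A : Finset ℕ} (hM : Odd M) (hc : c ∈ A)
    (hcM : c % (2 * M) = M) : SumsetDistinctMod (2 * M) A ↔ SumsetDistinctMod M (A.erase c) := by
  conv_lhs => rw [← insert_erase hc]
  exact ⟨.of_insert_of_mod_two_mul_eq hM hcM (notMem_erase c A),
    .insert_of_mod_two_mul_eq hM.pos.ne' hcM (notMem_erase c A)⟩

theorem sum_powerset_pow_sum {R : Type*} [CommSemiring R] (A : Finset ℕ) (y : R) :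
    ∑ B ∈ A.powerset, y ^ ∑ x ∈ B, x = ∏ x ∈ A, (1 + y ^ x) := by
  rw [prod_one_add]
  exact sum_congr rfl fun B _ => (prod_pow_eq_pow_sum B id y).symm

section Parity

variable {R : Type*} [CommRing R] {A : Finset ℕ} {a b : ℕ}

theorem sum_powerset_neg_one_pow_eq_zero (ha : a ∈ A) (hao : Odd a) :
    ∑ B ∈ A.powerset, (-1 : R) ^ ∑ x ∈ B, x = 0 := by
  rw [sum_powerset_pow_sum]
  exact prod_eq_zero ha (by rw [hao.neg_one_pow, add_neg_cancel])

theorem sum_powerset_neg_one_pow_mul_sum_eq_zero (ha : a ∈ A) (hb : b ∈ A) (hab : a ≠ b)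
    (hao : Odd a) (hbo : Odd b) :
    ∑ B ∈ A.powerset, (-1 : R) ^ (∑ x ∈ B, x) * ((∑ x ∈ B, x : ℕ) : R) = 0 := by
  obtain ⟨A, haA, rfl⟩ : ∃ A', a ∉ A' ∧ insert a A' = A :=
    ⟨A.erase a, notMem_erase a A, insert_erase ha⟩
  rw [sum_powerset_insert haA, ← sum_add_distrib]
  -- pairing `B` with `insert a B` leaves `-a` times the signed count of subsets of `A`
  calc _ = ∑ B ∈ A.powerset, -(a * (-1 : R) ^ ∑ x ∈ B, x) := by
        refine sum_congr rfl fun B hB => ?_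
        have haB : a ∉ B := fun haB => haA (mem_powerset.1 hB haB)
        rw [sum_insert haB, pow_add, hao.neg_one_pow]
        push_cast
        ring
    _ = 0 := by
        rw [sum_neg_distrib, ← mul_sum, sum_powerset_neg_one_pow_eq_zero
          ((mem_insert.1 hb).resolve_left hab.symm) hbo, mul_zero, neg_zero]

end Parity

def subsetsWithSumParity (A : Finset ℕ) (r : ℕ) : Finset (Finset ℕ) :=
  A.powerset.filter fun B => (∑ x ∈ B, x) % 2 = r

section SubsetsWithSumParity

variable {A : Finset ℕ}

theorem sum_powerset_eq_add {G : Type*} [AddCommMonoid G] (A : Finset ℕ) (F : Finset ℕ → G) :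
    ∑ B ∈ A.powerset, F B =
      ∑ B ∈ subsetsWithSumParity A 0, F B + ∑ B ∈ subsetsWithSumParity A 1, F B := by
  rw [← sum_filter_add_sum_filter_not A.powerset (fun B => (∑ x ∈ B, x) % 2 = 0),
    subsetsWithSumParity, subsetsWithSumParity, filter_congr fun B _ => Nat.mod_two_ne_zero]

theorem sum_powerset_neg_one_pow_mul {R : Type*} [CommRing R] (A : Finset ℕ) (F : Finset ℕ → R) :
    ∑ B ∈ A.powerset, (-1 : R) ^ (∑ x ∈ B, x) * F B =
      ∑ B ∈ subsetsWithSumParity A 0, F B - ∑ B ∈ subsetsWithSumParity A 1, F B := by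
  rw [sum_powerset_eq_add, sub_eq_add_neg, ← sum_neg_distrib]
  congr 1 <;> refine sum_congr rfl fun B hB => ?_ <;>
    rw [neg_one_pow_eq_pow_mod_two, (mem_filter.1 hB).2] <;> simp

theorem card_subsetsWithSumParity_add (A : Finset ℕ) :
    #(subsetsWithSumParity A 0) + #(subsetsWithSumParity A 1) = 2 ^ #A := by
  rw [← card_powerset, card_eq_sum_ones A.powerset, sum_powerset_eq_add, ← card_eq_sum_ones,
    ← card_eq_sum_ones]

theorem card_subsetsWithSumParity_zero {a : ℕ} (ha : a ∈ A) (hao : Odd a) :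
    #(subsetsWithSumParity A 0) = #(subsetsWithSumParity A 1) := by
  have := sum_powerset_neg_one_pow_mul (R := ℤ) A fun _ => 1
  simp only [mul_one, sum_powerset_neg_one_pow_eq_zero ha hao, sum_const, nsmul_eq_mul,
    eq_comm (a := (0 : ℤ)), sub_eq_zero] at this
  exact_mod_cast this

theorem SumsetDistinctMod.injOn_subsetsWithSumParity {M : ℕ} (hM : Odd M)
    (h : SumsetDistinctMod (2 * M) A) (r : ℕ) :
    Set.InjOn (fun B => ((∑ x ∈ B, x : ℕ) : ZMod M)) (subsetsWithSumParity A r) := by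
  intro B hB C hC hBC
  rw [mem_coe, subsetsWithSumParity, mem_filter, mem_powerset] at hB hC
  exact h B hB.1 C hC.1 (modEq_two_mul_of_odd hM (hB.2.trans hC.2.symm)
    ((ZMod.natCast_eq_natCast_iff _ _ _).1 hBC))

end SubsetsWithSumParity

theorem exists_forall_sum_comp_eq_sum_sub {ι α : Type*} [Fintype α] [DecidableEq α]
    {s : Finset ι} {f : ι → α} (hf : Set.InjOn f s) (hs : #s + 1 = Fintype.card α) :
    ∃ m : α, ∀ (G : Type*) [AddCommGroup G] (g : α → G), ∑ i ∈ s, g (f i) = ∑ a, g a - g m := by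
  obtain ⟨m, hm⟩ : ∃ m, (s.image f)ᶜ = {m} :=
    card_eq_one.1 (by rw [card_compl, card_image_of_injOn hf]; omega)
  refine ⟨m, fun G _ g => ?_⟩
  rw [← sum_image hf, ← sum_erase_eq_sub (mem_univ m), ← compl_singleton, ← hm, compl_compl]

theorem exists_dvd_of_sum_powerset_pow_eq_zero {K : Type*} [CommRing K] [IsDomain K]
    (h₂ : (2 : K) = 0) {ζ : K} {M : ℕ} (hζ : IsPrimitiveRoot ζ M) {A : Finset ℕ}
    (h : ∑ B ∈ A.powerset, ζ ^ ∑ x ∈ B, x = 0) : ∃ x ∈ A, M ∣ x := by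
  rw [sum_powerset_pow_sum, prod_eq_zero_iff] at h
  obtain ⟨x, hx, hx0⟩ := h
  exact ⟨x, hx, hζ.dvd_of_pow_eq_one x (by linear_combination hx0 - h₂)⟩

theorem exists_dvd_of_forall_sum_powerset_eq {M : ℕ} [NeZero M] (hM : Odd M) {A : Finset ℕ}
    {m : ZMod M} (h : ∀ (G : Type) [AddCommGroup G] (g : ZMod M → G),
      ∑ B ∈ A.powerset, g (∑ x ∈ B, x : ℕ) = 2 • (∑ j, g j - g m)) :
    ∃ x ∈ A, M ∣ x := by
  have : NeZero ((M : ℕ) : ZMod 2) :=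
    ⟨by rw [Ne, ZMod.natCast_eq_zero_iff_even]; exact Nat.not_even_iff_odd.2 hM⟩
  set K := CyclotomicField M (ZMod 2)
  set ζ := IsCyclotomicExtension.zeta M (ZMod 2) K
  have hζ : IsPrimitiveRoot ζ M := IsCyclotomicExtension.zeta_spec M (ZMod 2) K
  have h₂ : (2 : K) = 0 := by
    rw [← map_ofNat (algebraMap (ZMod 2) K) 2]
    exact map_zero _
  have hζpow : ∀ n : ℕ, ζ ^ (n : ZMod M).val = ζ ^ n := fun n => by
    have := pow_mod_orderOf ζ n
    rwa [← hζ.eq_orderOf, ← ZMod.val_natCast] at this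
  refine exists_dvd_of_sum_powerset_pow_eq_zero h₂ hζ ?_
  have := h K fun j => ζ ^ j.val
  simp only [hζpow] at this
  rw [this, nsmul_eq_mul, Nat.cast_ofNat, h₂, zero_mul]

theorem SumsetDistinctMod.exists_forall_sum_powerset_eq {M : ℕ} [NeZero M] {A : Finset ℕ}
    (hM : Odd M) (hcard : 2 ^ #A + 2 = 2 * M) (h : SumsetDistinctMod (2 * M) A) {a b : ℕ}
    (ha : a ∈ A) (hb : b ∈ A) (hab : a ≠ b) (hao : Odd a) (hbo : Odd b) :
    ∃ m : ZMod M, ∀ (G : Type) [AddCommGroup G] (g : ZMod M → G),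
      ∑ B ∈ A.powerset, g (∑ x ∈ B, x : ℕ) = 2 • (∑ j, g j - g m) := by
  have hS₀ := card_subsetsWithSumParity_zero ha hao
  have hS := card_subsetsWithSumParity_add A
  obtain ⟨m₀, hm₀⟩ := exists_forall_sum_comp_eq_sum_sub (h.injOn_subsetsWithSumParity hM 0)
    (by rw [ZMod.card]; omega)
  obtain ⟨m₁, hm₁⟩ := exists_forall_sum_comp_eq_sum_sub (h.injOn_subsetsWithSumParity hM 1)
    (by rw [ZMod.card]; omega)
  obtain rfl : m₀ = m₁ := by
    have := sum_powerset_neg_one_pow_mul_sum_eq_zero (R := ZMod M) ha hb hab hao hbo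
    have e₀ := hm₀ (ZMod M) id
    have e₁ := hm₁ (ZMod M) id
    simp only [id] at e₀ e₁
    rw [sum_powerset_neg_one_pow_mul, e₀, e₁] at this
    linear_combination -this
  exact ⟨m₀, fun G _ g => by rw [sum_powerset_eq_add, hm₀, hm₁, two_nsmul]⟩

theorem SumsetDistinctMod.exists_mod_two_mul_eq {M : ℕ} {A : Finset ℕ} (hM : Odd M)
    (hcard : 2 ^ #A + 2 = 2 * M) (h : SumsetDistinctMod (2 * M) A) {a b : ℕ} (ha : a ∈ A)
    (hb : b ∈ A) (hab : a ≠ b) (hao : Odd a) (hbo : Odd b) : ∃ c ∈ A, c % (2 * M) = M := by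
  have : NeZero M := ⟨hM.pos.ne'⟩
  obtain ⟨m, hm⟩ := h.exists_forall_sum_powerset_eq hM hcard ha hb hab hao hbo
  obtain ⟨x, hx, hMx⟩ := exists_dvd_of_forall_sum_powerset_eq hM hm
  exact ⟨x, hx, h.mod_two_mul_eq_of_dvd hM hx hMx⟩

theorem stmt7_general (n : ℕ) (hn : 2 ≤ n) (N : ℕ) (hN : N = 2 ^ n + 2)
    (A : Finset ℕ) (hcard : A.card = n) :
    SumsetDistinctMod N A ↔
      ((∃ a ∈ A, Odd a ∧ (∀ b ∈ A, b ≠ a → Even b) ∧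
          SumsetDistinctMod (N / 2) ((A.erase a).image (fun b => b / 2))) ∨
        (∃ c ∈ A, c % N = N / 2 ∧ SumsetDistinctMod (N / 2) (A.erase c))) := by
  obtain ⟨k, rfl⟩ : ∃ k, n = k + 2 := ⟨n - 2, by omega⟩
  set M := 2 ^ (k + 1) + 1
  have hM : Odd M := (Nat.even_pow.2 ⟨even_two, k.succ_ne_zero⟩).add_one
  have hAM : 2 ^ #A + 2 = 2 * M := by rw [hcard, pow_succ]; ring
  obtain rfl : N = 2 * M := by rw [hN, ← hAM, hcard]
  rw [Nat.mul_div_cancel_left M two_pos]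
  constructor
  · intro h
    obtain ⟨a, ha, hao⟩ := h.exists_odd hM (by have := Nat.one_lt_two_pow k.succ_ne_zero; omega)
    by_cases hodd : ∃ b ∈ A, b ≠ a ∧ Odd b
    · obtain ⟨b, hb, hba, hbo⟩ := hodd
      obtain ⟨c, hc, hcM⟩ := h.exists_mod_two_mul_eq hM hAM ha hb (Ne.symm hba) hao hbo
      exact Or.inr ⟨c, hc, hcM, (sumsetDistinctMod_two_mul_iff_erase hM hc hcM).1 h⟩
    · push Not at hodd
      have hev : ∀ b ∈ A, b ≠ a → Even b := fun b hb hba => Nat.not_odd_iff_even.1 (hodd b hb hba)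
      exact Or.inl ⟨a, ha, hao, hev, (sumsetDistinctMod_two_mul_iff_image_div_two ha hao hev).1 h⟩
  · rintro (⟨a, ha, hao, hev, h⟩ | ⟨c, hc, hcM, h⟩)
    · exact (sumsetDistinctMod_two_mul_iff_image_div_two ha hao hev).2 h
    · exact (sumsetDistinctMod_two_mul_iff_erase hM hc hcM).2 h

theorem stmt7 (n : ℕ) (hn : 2 ≤ n) (N : ℕ) (hN : N = 2 ^ n + 2)
    (A : Finset ℕ) (hpos : ∀ a ∈ A, 0 < a) (hcard : A.card = n) :
    SumsetDistinctMod N A ↔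
      ((∃ a ∈ A, Odd a ∧ (∀ b ∈ A, b ≠ a → Even b) ∧
          SumsetDistinctMod (N / 2) ((A.erase a).image (fun b => b / 2))) ∨
        (∃ c ∈ A, c % N = N / 2 ∧ SumsetDistinctMod (N / 2) (A.erase c))) :=
  stmt7_general n hn N hN A hcard
end

section
/- Let A = {a_1, a_2, …, a_n} be an n-element set of positive integers all of whose 2^n subset sums are pairwise distinct (as integers), and let N = 1 + a_1 + a_2 + … + a_n. If an element a_i of A satisfies a_i ≤ 2^{n-1} - 1, then 3·a_i < N. -/
/-!
Suppose `3a ≥ N`. Then the elements of `A` other than `a` sum to less than `2a`, so their `2^(n-1)`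
subset sums, which are pairwise distinct, all lie in `[0, 2a)`. No two of them differ by exactly `a`,
since `t + a = t'` would give two distinct subsets of `A` with the same sum. Hence they have pairwise
distinct residues modulo `a`, and `2^(n-1) ≤ a`.
-/

open Finset

theorem card_le_of_forall_lt_two_mul_of_add_notMem {T : Finset ℕ} {a : ℕ}
    (hlt : ∀ t ∈ T, t < 2 * a) (hadd : ∀ t ∈ T, t + a ∉ T) : #T ≤ a := by
  have hinj : Set.InjOn (· % a) (T : Set ℕ) := by
    intro s hs t ht hst
    wlog hst_le : s ≤ t generalizing s t
    · exact (this ht hs hst.symm (le_of_not_ge hst_le)).symm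
    by_contra hne
    have hdiff : t - s = a := Nat.eq_of_dvd_of_lt_two_mul (by omega)
      (Nat.dvd_of_mod_eq_zero (Nat.sub_mod_eq_zero_of_mod_eq hst.symm))
      (by have := hlt t ht; omega)
    exact hadd s hs (by rwa [show s + a = t by omega])
  simpa using card_le_card_of_injOn (· % a)
    (fun t ht => mem_range.2 (Nat.mod_lt t (by have := hlt t ht; omega))) hinj

section SubsetSums

variable {M : Type*} [AddCommMonoid M] [DecidableEq M]

def subsetSums (A : Finset M) : Finset M :=
  A.powerset.image fun B => ∑ x ∈ B, x

theorem mem_subsetSums {A : Finset M} {t : M} :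
    t ∈ subsetSums A ↔ ∃ B ⊆ A, ∑ x ∈ B, x = t := by
  simp [subsetSums]

variable {A : Finset M} (hdss : ∀ B ⊆ A, ∀ C ⊆ A, (∑ x ∈ B, x) = (∑ x ∈ C, x) → B = C)
include hdss

theorem card_subsetSums_of_subset {A' : Finset M} (hA' : A' ⊆ A) : #(subsetSums A') = 2 ^ #A' := by
  rw [subsetSums, card_image_of_injOn, card_powerset]
  intro B hB C hC
  exact hdss B ((mem_powerset.1 hB).trans hA') C ((mem_powerset.1 hC).trans hA')

theorem add_notMem_subsetSums_erase {a t : M} (ha : a ∈ A) (ht : t ∈ subsetSums (A.erase a)) :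
    t + a ∉ subsetSums (A.erase a) := by
  rw [mem_subsetSums] at ht ⊢
  rintro ⟨C, hC, hCsum⟩
  obtain ⟨B, hB, rfl⟩ := ht
  have haB : a ∉ B := fun h => notMem_erase a A (hB h)
  have hinsert : insert a B = C := by
    refine hdss _ (insert_subset ha (hB.trans (erase_subset a A))) C (hC.trans (erase_subset a A)) ?_
    rw [sum_insert haB, hCsum, add_comm]
  exact notMem_erase a A (hC (hinsert ▸ mem_insert_self a B))

end SubsetSums

theorem stmt10_general (n : ℕ) (A : Finset ℕ) (hcard : A.card = n)
    (hdss : ∀ B ⊆ A, ∀ C ⊆ A, (∑ x ∈ B, x) = (∑ x ∈ C, x) → B = C)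
    (N : ℕ) (hN : N = 1 + ∑ a ∈ A, a)
    (a : ℕ) (ha : a ∈ A) (hle : a ≤ 2 ^ (n - 1) - 1) :
    3 * a < N := by
  by_contra! hN_le
  have hsum_erase : ∑ x ∈ A.erase a, x < 2 * a := by
    have := sum_erase_add A (fun x => x) ha
    omega
  have hcard_sums : #(subsetSums (A.erase a)) = 2 ^ (n - 1) := by
    rw [card_subsetSums_of_subset hdss (erase_subset a A), card_erase_of_mem ha, hcard]
  have hcard_le : #(subsetSums (A.erase a)) ≤ a := by
    refine card_le_of_forall_lt_two_mul_of_add_notMem (fun t ht => ?_)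
      (fun t ht => add_notMem_subsetSums_erase hdss ha ht)
    obtain ⟨B, hB, rfl⟩ := mem_subsetSums.1 ht
    exact (sum_le_sum_of_subset hB).trans_lt hsum_erase
  have := Nat.two_pow_pos (n - 1)
  omega

theorem stmt10 (n : ℕ) (A : Finset ℕ) (hpos : ∀ a ∈ A, 0 < a) (hcard : A.card = n)
    (hdss : ∀ B ⊆ A, ∀ C ⊆ A, (∑ x ∈ B, x) = (∑ x ∈ C, x) → B = C)
    (N : ℕ) (hN : N = 1 + ∑ a ∈ A, a)
    (a : ℕ) (ha : a ∈ A) (hle : a ≤ 2 ^ (n - 1) - 1) :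
    3 * a < N :=
  stmt10_general n A hcard hdss N hN a ha hle
end

section
/- Let n ≥ 2, let N = 2^n + 2, and let A be an n-element set of positive integers that is sumset-distinct modulo N and contains no element congruent to N/2 modulo N. Then A contains exactly one odd element. -/
open Finset DualNumber TrivSqZeroExt

section Nilpotent

variable {R : Type*} [CommRing R] {e : R}

theorem one_add_pow_of_mul_self_eq_zero (he : e * e = 0) (k : ℕ) :
    (1 + e) ^ k = 1 + k * e := by
  induction k with
  | zero => simp
  | succ k ih => rw [pow_succ, ih]; push_cast; linear_combination (k : R) * he

theorem sum_range_two_mul_neg_one_add_pow (he : e * e = 0) (m : ℕ) :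
    ∑ t ∈ range (2 * m), (-(1 + e)) ^ t = -(m * e) := by
  induction m with
  | zero => simp
  | succ m ih =>
    rw [show 2 * (m + 1) = 2 * m + 1 + 1 by ring, sum_range_succ, sum_range_succ, ih,
      neg_pow, neg_pow _ (2 * m + 1), one_add_pow_of_mul_self_eq_zero he,
      one_add_pow_of_mul_self_eq_zero he, pow_succ, pow_mul]
    push_cast
    ring

end Nilpotent

theorem Finset.prod_eq_zero_of_mul_eq_zero {ι M : Type*} [CommMonoidWithZero M] [DecidableEq ι]
    {s : Finset ι} {f : ι → M} {a b : ι} (ha : a ∈ s) (hb : b ∈ s) (hab : a ≠ b)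
    (h : f a * f b = 0) : ∏ i ∈ s, f i = 0 := by
  rw [← mul_prod_erase s f ha, ← mul_prod_erase _ f (mem_erase.mpr ⟨hab.symm, hb⟩), ← mul_assoc,
    h, zero_mul]

theorem IsPrimitiveRoot.pow_half_eq_neg_one {R : Type*} [CommRing R] [IsDomain R] {η : R} {N : ℕ}
    (hη : IsPrimitiveRoot η N) (hN : Even N) (hN0 : N ≠ 0) : η ^ (N / 2) = -1 := by
  have h2 : 2 ∣ N := hN.two_dvd
  apply IsPrimitiveRoot.eq_neg_one_of_two_right
  have := hη.pow_of_dvd (p := N / 2) (by omega) (Nat.div_dvd_of_dvd h2)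
  rwa [Nat.div_div_self h2 hN0] at this

theorem IsPrimitiveRoot.pow_ne_neg_one {R : Type*} [CommRing R] [IsDomain R] {η : R} {N : ℕ}
    (hη : IsPrimitiveRoot η N) (hN : Even N) (hN0 : N ≠ 0) {a : ℕ} (ha : a % N ≠ N / 2) :
    η ^ a ≠ -1 := by
  rw [← hη.pow_half_eq_neg_one hN hN0, pow_eq_pow_mod a hη.pow_eq_one]
  exact fun h => ha (hη.pow_inj (Nat.mod_lt _ (by omega)) (by omega) h)

def missingResidues (N : ℕ) (A : Finset ℕ) : Finset ℕ :=
  range N \ A.powerset.image fun B => (∑ x ∈ B, x) % N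

theorem powerset_image_sum_mod_subset_range {N : ℕ} {A : Finset ℕ} (hN : 0 < N) :
    (A.powerset.image fun B => (∑ x ∈ B, x) % N) ⊆ range N := by
  intro t ht
  obtain ⟨B, -, rfl⟩ := mem_image.mp ht
  exact mem_range.mpr (Nat.mod_lt _ hN)

namespace SumsetDistinctMod

variable {N : ℕ} {A : Finset ℕ}

theorem injOn_sum_mod (hA : SumsetDistinctMod N A) :
    Set.InjOn (fun B => (∑ x ∈ B, x) % N) A.powerset := fun B hB C hC h =>
  hA B (mem_powerset.mp hB) C (mem_powerset.mp hC) h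

theorem card_missingResidues (hA : SumsetDistinctMod N A) (hN : 0 < N) :
    #(missingResidues N A) = N - 2 ^ #A := by
  rw [missingResidues, card_sdiff_of_subset (powerset_image_sum_mod_subset_range hN),
    card_image_of_injOn hA.injOn_sum_mod, card_powerset, card_range]

theorem prod_one_add_pow_add_sum_missingResidues {R : Type*} [CommRing R]
    (hA : SumsetDistinctMod N A) (hN : 0 < N) {z : R} (hz : z ^ N = 1) :
    ∏ a ∈ A, (1 + z ^ a) + ∑ t ∈ missingResidues N A, z ^ t = ∑ t ∈ range N, z ^ t := by
  have hsubsets :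
      ∏ a ∈ A, (1 + z ^ a) = ∑ t ∈ A.powerset.image fun B => (∑ x ∈ B, x) % N, z ^ t := by
    rw [prod_one_add, sum_image hA.injOn_sum_mod]
    exact sum_congr rfl fun B _ => by rw [prod_pow_eq_pow_sum, ← pow_eq_pow_mod _ hz]
  rw [hsubsets, missingResidues, add_comm, sum_sdiff (powerset_image_sum_mod_subset_range hN)]

theorem exists_odd_s15 (hA : SumsetDistinctMod N A) (hN : 0 < N) (hNeven : Even N)
    (hlt : N < 2 ^ (#A + 1)) : ∃ a ∈ A, Odd a := by
  by_contra! hall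
  have hprod : ∏ a ∈ A, (1 + (-1 : ℤ) ^ a) = 2 ^ #A := by
    rw [prod_congr rfl fun a ha => by rw [(Nat.not_odd_iff_even.mp (hall a ha)).neg_one_pow],
      prod_const]
    norm_num
  have hsum := hA.prod_one_add_pow_add_sum_missingResidues hN (hNeven.neg_one_pow (α := ℤ))
  rw [hprod, neg_one_geom_sum, if_pos hNeven] at hsum
  have hbound : ∑ t ∈ missingResidues N A, -(-1 : ℤ) ^ t ≤ #(missingResidues N A) := by
    simpa using sum_le_card_nsmul (missingResidues N A) (fun t => -(-1 : ℤ) ^ t) 1 fun t _ => by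
      rcases neg_one_pow_eq_or ℤ t with h | h <;> simp [h]
  rw [sum_neg_distrib, hA.card_missingResidues hN] at hbound
  have hle : 2 ^ #A ≤ N - 2 ^ #A := by
    have : ((2 ^ #A : ℕ) : ℤ) ≤ ((N - 2 ^ #A : ℕ) : ℤ) := by push_cast at hbound ⊢; linarith
    exact_mod_cast this
  rw [pow_succ] at hlt
  omega

theorem sum_missingResidues_neg_one_pow (hA : SumsetDistinctMod N A) (hN : 0 < N)
    (hNeven : Even N) {a : ℕ} (ha : a ∈ A) (hodd : Odd a) :
    ∑ t ∈ missingResidues N A, (-1 : ℤ) ^ t = 0 := by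
  have hsum := hA.prod_one_add_pow_add_sum_missingResidues hN (hNeven.neg_one_pow (α := ℤ))
  rwa [prod_eq_zero ha (by rw [hodd.neg_one_pow, add_neg_cancel]), zero_add, neg_one_geom_sum,
    if_pos hNeven] at hsum

theorem sum_missingResidues_neg_one_add_eps_pow (hA : SumsetDistinctMod N A) (hN : 0 < N)
    (hNeven : Even N) {a b : ℕ} (ha : a ∈ A) (hb : b ∈ A) (hab : a ≠ b) (hodd_a : Odd a)
    (hodd_b : Odd b) :
    ∑ t ∈ missingResidues N A, (-(1 + ε) : (ZMod N)[ε]) ^ t =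
      -(((N / 2 : ℕ) : (ZMod N)[ε]) * ε) := by
  have hεε : (ε * ε : (ZMod N)[ε]) = 0 := eps_mul_eps
  have hNzero : (N : (ZMod N)[ε]) = 0 := by rw [← inl_natCast, ZMod.natCast_self, inl_zero]
  have hz : (-(1 + ε) : (ZMod N)[ε]) ^ N = 1 := by
    rw [hNeven.neg_pow, one_add_pow_of_mul_self_eq_zero hεε, hNzero, zero_mul, add_zero]
  have hodd_factor :
      ∀ {c : ℕ}, Odd c → 1 + (-(1 + ε) : (ZMod N)[ε]) ^ c = -((c : (ZMod N)[ε]) * ε) := by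
    intro c hc
    rw [hc.neg_pow, one_add_pow_of_mul_self_eq_zero hεε]
    ring
  have hprod : ∏ c ∈ A, (1 + (-(1 + ε) : (ZMod N)[ε]) ^ c) = 0 :=
    prod_eq_zero_of_mul_eq_zero ha hb hab <| by
      rw [hodd_factor hodd_a, hodd_factor hodd_b]
      linear_combination ((a : (ZMod N)[ε]) * b) * hεε
  obtain ⟨m, rfl⟩ := hNeven.two_dvd
  rw [← sum_range_two_mul_neg_one_add_pow hεε, Nat.mul_div_cancel_left m two_pos,
    ← hA.prod_one_add_pow_add_sum_missingResidues hN hz, hprod, zero_add]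

theorem modEq_add_half_of_missingResidues_eq_pair (hA : SumsetDistinctMod N A) (hN : 0 < N)
    (hNeven : Even N) {u v : ℕ} (huv : u ≠ v) (hmiss : missingResidues N A = {u, v}) {a b : ℕ}
    (ha : a ∈ A) (hb : b ∈ A) (hab : a ≠ b) (hodd_a : Odd a) (hodd_b : Odd b) :
    v ≡ u + N / 2 [MOD N] := by
  have hsign := hA.sum_missingResidues_neg_one_pow hN hNeven ha hodd_a
  have hdual := hA.sum_missingResidues_neg_one_add_eps_pow hN hNeven ha hb hab hodd_a hodd_b
  rw [hmiss, sum_pair huv] at hsign hdual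
  rw [neg_pow, neg_pow _ v, one_add_pow_of_mul_self_eq_zero eps_mul_eps,
    one_add_pow_of_mul_self_eq_zero eps_mul_eps] at hdual
  obtain ⟨m, rfl⟩ := hNeven.two_dvd
  rw [Nat.mul_div_cancel_left m two_pos] at hdual ⊢
  have hsign' : (-1 : (ZMod (2 * m))[ε]) ^ v = -(-1) ^ u := by
    have := congrArg (Int.cast : ℤ → (ZMod (2 * m))[ε]) hsign
    push_cast at this
    linear_combination this
  have hNzero : ((2 * m : ℕ) : (ZMod (2 * m))[ε]) = 0 := by
    rw [← inl_natCast, ZMod.natCast_self, inl_zero]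
  push_cast at hNzero
  have hzero :
      ((v : (ZMod (2 * m))[ε]) - (u : (ZMod (2 * m))[ε]) - (m : (ZMod (2 * m))[ε])) * ε = 0 := by
    rw [hsign'] at hdual
    rcases neg_one_pow_eq_or (ZMod (2 * m))[ε] u with hu | hu <;> rw [hu] at hdual
    · linear_combination -hdual
    · linear_combination hdual - hNzero * ε
  have hsnd := congrArg snd hzero
  simp only [DualNumber.snd_mul, fst_sub, fst_natCast, snd_eps, snd_sub, snd_natCast, fst_eps,
    snd_zero] at hsnd
  rw [← ZMod.natCast_eq_natCast_iff]
  push_cast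
  linear_combination hsnd

theorem sum_missingResidues_pow_ne_zero {R : Type*} [CommRing R] [IsDomain R]
    (hA : SumsetDistinctMod N A) (hN : 0 < N) (hNeven : Even N) {η : R}
    (hη : IsPrimitiveRoot η N) (hhalf : ∀ a ∈ A, a % N ≠ N / 2) :
    ∑ t ∈ missingResidues N A, η ^ t ≠ 0 := by
  intro hsum
  have hprod := hA.prod_one_add_pow_add_sum_missingResidues hN hη.pow_eq_one
  rw [hsum, add_zero, hη.geom_sum_eq_zero (by obtain ⟨k, hk⟩ := hNeven; omega)] at hprod
  refine prod_ne_zero_iff.mpr (fun a ha h => ?_) hprod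
  exact hη.pow_ne_neg_one hNeven hN.ne' (hhalf a ha) (eq_neg_of_add_eq_zero_right h)

end SumsetDistinctMod

theorem stmt15_general (n : ℕ) (hn : 2 ≤ n) (N : ℕ) (hN : N = 2 ^ n + 2)
    (A : Finset ℕ) (hcard : A.card = n)
    (hA : SumsetDistinctMod N A)
    (hhalf : ∀ a ∈ A, a % N ≠ N / 2) :
    ∃! a, a ∈ A ∧ Odd a := by
  have h4 : 4 ≤ 2 ^ n := by simpa using Nat.pow_le_pow_right two_pos hn
  have hN0 : 0 < N := by omega
  have hNeven : Even N := by
    rw [hN]; exact (Nat.even_pow.mpr ⟨even_two, by omega⟩).add even_two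
  obtain ⟨u, v, huv, hmiss⟩ : ∃ u v, u ≠ v ∧ missingResidues N A = {u, v} :=
    card_eq_two.mp (by rw [hA.card_missingResidues hN0, hcard]; omega)
  obtain ⟨a, haA, ha⟩ := hA.exists_odd_s15 hN0 hNeven (by rw [hcard, pow_succ]; omega)
  refine ⟨a, ⟨haA, ha⟩, fun b ⟨hbA, hb⟩ => by_contra fun hba => ?_⟩
  have hvu :=
    hA.modEq_add_half_of_missingResidues_eq_pair hN0 hNeven huv hmiss haA hbA (Ne.symm hba) ha hb
  obtain ⟨η, hη⟩ : ∃ η : ℂ, IsPrimitiveRoot η N := ⟨_, Complex.isPrimitiveRoot_exp N hN0.ne'⟩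
  apply hA.sum_missingResidues_pow_ne_zero hN0 hNeven hη hhalf
  rw [hmiss, sum_pair huv, pow_eq_pow_mod v hη.pow_eq_one, hvu, ← pow_eq_pow_mod _ hη.pow_eq_one,
    pow_add, hη.pow_half_eq_neg_one hNeven hN0.ne']
  ring

theorem stmt15 (n : ℕ) (hn : 2 ≤ n) (N : ℕ) (hN : N = 2 ^ n + 2)
    (A : Finset ℕ) (hpos : ∀ a ∈ A, 0 < a) (hcard : A.card = n)
    (hA : SumsetDistinctMod N A)
    (hhalf : ∀ a ∈ A, a % N ≠ N / 2) :
    ∃! a, a ∈ A ∧ Odd a :=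
  stmt15_general n hn N hN A hcard hA hhalf
end
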